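/- If a polynomial f over ℕ with zero constant term has complexity c, then its sum of coefficients satisfies f(1) ≤ 3^{c/3}. -/
import Mathlib

open Polynomial

/-- Expressions built from a single symbol `x` using addition and multiplication. -/
inductive Expr where
  | x : Expr
  | add : Expr → Expr → Expr
  | mul : Expr → Expr → Expr

/-- The size of an expression: the number of occurrences of `x`. -/
def Expr.size : Expr → ℕ
  | .x => 1
  | .add a b => a.size + b.size
  | .mul a b => a.size + b.size

/-- Evaluate an expression, sending the symbol `x` to `z`. -/
def Expr.eval {R : Type*} [Add R] [Mul R] (z : R) : Expr → R
  | .x => z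
  | .add a b => a.eval z + b.eval z
  | .mul a b => a.eval z * b.eval z

/-- The complexity of a polynomial `f ∈ ℕ[X]`: the least number of `x`'s in an
expression evaluating to `f` at `x = X`. -/
noncomputable def polyComplexity (f : Polynomial ℕ) : ℕ :=
  sInf {m | ∃ e : Expr, e.size = m ∧ e.eval (Polynomial.X : Polynomial ℕ) = f}

/-- The `n`-th complexity class: polynomials over `ℕ` (expressible, hence with zero
constant term) whose complexity is exactly `n`. -/
noncomputable def K (n : ℕ) : Set (Polynomial ℕ) :=
  {f | (∃ e : Expr, e.eval (Polynomial.X : Polynomial ℕ) = f) ∧ polyComplexity f = n}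

lemma Expr.size_pos (e : Expr) : 1 ≤ e.size := by
  induction e <;> simp [Expr.size] <;> omega

lemma Expr.one_le_eval_one (e : Expr) : 1 ≤ e.eval (1 : ℕ) := by
  induction e with
  | x => simp [Expr.eval]
  | add a b ha hb => simp only [Expr.eval]; omega
  | mul a b ha hb => simp only [Expr.eval]; exact Nat.one_le_iff_ne_zero.2 (by positivity)

lemma one_add_cube (q m : ℕ) (hq : 1 ≤ q) (hm : 1 ≤ m) (h : q ^ 3 ≤ 3 ^ m) :
    (1 + q) ^ 3 ≤ 3 ^ (m + 1) := by
  rcases le_or_gt 3 q with h3 | h3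
  · have h1 : (1 + q) ^ 3 ≤ 3 * q ^ 3 := by
      nlinarith [Nat.mul_le_mul_right q h3, Nat.mul_le_mul_right (q * q) h3]
    calc (1 + q) ^ 3 ≤ 3 * q ^ 3 := h1
      _ ≤ 3 * 3 ^ m := by omega
      _ = 3 ^ (m + 1) := by ring
  · interval_cases q
    · have : (9 : ℕ) ≤ 3 ^ (m + 1) := by
        calc (9 : ℕ) = 3 ^ 2 := by norm_num
          _ ≤ 3 ^ (m + 1) := Nat.pow_le_pow_right (by norm_num) (by omega)
      omega
    · have hm2 : 2 ≤ m := by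
        by_contra hlt
        interval_cases m <;> omega
      have : (27 : ℕ) ≤ 3 ^ (m + 1) := by
        calc (27 : ℕ) = 3 ^ 3 := by norm_num
          _ ≤ 3 ^ (m + 1) := Nat.pow_le_pow_right (by norm_num) (by omega)
      omega

lemma Expr.cube_eval_le (e : Expr) : (e.eval (1 : ℕ)) ^ 3 ≤ 3 ^ e.size := by
  induction e with
  | x => simp [Expr.eval, Expr.size]
  | mul a b ha hb =>
    simp only [Expr.eval, Expr.size, pow_add, mul_pow]
    exact Nat.mul_le_mul ha hb
  | add a b ha hb =>
    simp only [Expr.eval, Expr.size, pow_add]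
    set p := a.eval (1 : ℕ) with hp
    set q := b.eval (1 : ℕ) with hq
    have hp1 : 1 ≤ p := a.one_le_eval_one
    have hq1 : 1 ≤ q := b.one_le_eval_one
    have hsa : 1 ≤ a.size := a.size_pos
    have hsb : 1 ≤ b.size := b.size_pos
    rcases le_or_gt 2 p with hp2 | hp2
    · rcases le_or_gt 2 q with hq2 | hq2
      · have h1 : (p + q) ^ 3 ≤ p ^ 3 * q ^ 3 := by
          have hpq : p + q ≤ p * q := Nat.add_le_mul hp2 hq2
          calc (p + q) ^ 3 ≤ (p * q) ^ 3 := Nat.pow_le_pow_left hpq 3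
            _ = p ^ 3 * q ^ 3 := by ring
        exact h1.trans (Nat.mul_le_mul ha hb)
      · -- q = 1
        have hq' : q = 1 := by omega
        rw [hq']
        have := one_add_cube p a.size hp1 hsa ha
        calc (p + 1) ^ 3 = (1 + p) ^ 3 := by ring
          _ ≤ 3 ^ (a.size + 1) := this
          _ = 3 ^ a.size * 3 ^ 1 := by ring
          _ ≤ 3 ^ a.size * 3 ^ b.size :=
            Nat.mul_le_mul_left _ (Nat.pow_le_pow_right (by norm_num) hsb)
    · -- p = 1
      have hp' : p = 1 := by omega
      rw [hp']
      have := one_add_cube q b.size hq1 hsb hb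
      calc (1 + q) ^ 3 ≤ 3 ^ (b.size + 1) := this
        _ = 3 ^ 1 * 3 ^ b.size := by ring
        _ ≤ 3 ^ a.size * 3 ^ b.size :=
          Nat.mul_le_mul_right _ (Nat.pow_le_pow_right (by norm_num) hsa)

lemma Expr.eval_eval (e : Expr) :
    Polynomial.eval (1 : ℕ) (e.eval (Polynomial.X : Polynomial ℕ)) = e.eval (1 : ℕ) := by
  induction e with
  | x => simp [Expr.eval]
  | add a b ha hb => simp [Expr.eval, ha, hb]
  | mul a b ha hb => simp [Expr.eval, ha, hb]

theorem coeff_sum_le_of_complexity (f : Polynomial ℕ) (c : ℕ)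
    (hf : ∃ e : Expr, e.eval (Polynomial.X : Polynomial ℕ) = f)
    (hc : polyComplexity f = c) :
    ((f.eval 1 : ℕ) : ℝ) ≤ 3 ^ ((c : ℝ) / 3) := by
  obtain ⟨e0, he0⟩ := hf
  have hne : {m | ∃ e : Expr, e.size = m ∧ e.eval (Polynomial.X : Polynomial ℕ) = f}.Nonempty :=
    ⟨e0.size, e0, rfl, he0⟩
  have hmem : c ∈ {m | ∃ e : Expr, e.size = m ∧ e.eval (Polynomial.X : Polynomial ℕ) = f} := by
    rw [← hc]
    exact Nat.sInf_mem hne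
  obtain ⟨e, hsize, heval⟩ := hmem
  have hn : f.eval 1 = e.eval (1 : ℕ) := by rw [← heval, e.eval_eval]
  have hkey : (f.eval 1) ^ 3 ≤ 3 ^ c := by
    rw [hn, ← hsize]; exact e.cube_eval_le
  have h3 : ((f.eval 1 : ℕ) : ℝ) ^ 3 ≤ (3 : ℝ) ^ (c : ℕ) := by exact_mod_cast hkey
  have hrpow : ((3 : ℝ) ^ ((c : ℝ) / 3)) ^ (3 : ℕ) = (3 : ℝ) ^ (c : ℕ) := by
    rw [← Real.rpow_natCast ((3 : ℝ) ^ ((c : ℝ) / 3)) 3, ← Real.rpow_mul (by norm_num)]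
    have hx : (c : ℝ) / 3 * ((3 : ℕ) : ℝ) = ((c : ℕ) : ℝ) := by push_cast; field_simp
    rw [hx, Real.rpow_natCast]
  refine le_of_pow_le_pow_left₀ (n := 3) (by norm_num) (Real.rpow_nonneg (by norm_num) _) ?_
  rw [hrpow]
  exact h3
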